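/- Let H be a stack history with no failed operations such that res(o) < 0 for every o ∈ H, and let mirror(H) consist of one fresh operation per o ∈ H having the same value as o, method push if o has method pop, method pop if o has method push, method peek if o has method peek, invocation time −res(o) and response time −inv(o). Then H is linearizable with respect to T_stack if and only if H ∪ mirror(H) is linearizable with respect to T_stack. -/

import Mathlib

structure Operation (M V : Type) where
  id : ℕ
  method : M
  value : V
  tinv : ℚ
  tres : ℚ
deriving DecidableEq

def WellFormed {M V : Type} (H : Finset (Operation M V)) : Prop :=
  ∀ o ∈ H, o.tinv < o.tres

def IsPartitionState {M V : Type} (H S : Finset (Operation M V)) : Prop :=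
  S ⊆ H ∧ ∃ t : ℚ, ∀ o ∈ H, (o.tres < t → o ∈ S) ∧ (t < o.tinv → o ∉ S)

def IsLinearization {M V : Type} (X : Finset (Operation M V)) (ℓ : Operation M V → ℚ) : Prop :=
  Set.InjOn ℓ ↑X ∧ ∀ o ∈ X, o.tinv < ℓ o ∧ ℓ o < o.tres

/-- `τ` is the abstract sequence induced by `ℓ` on `X`: it lists the
abstractions of the elements of `X` in increasing order of `ℓ`. -/
def InducedSeq {M V A : Type} (abs : Operation M V → A) (X : Finset (Operation M V))
    (ℓ : Operation M V → ℚ) (τ : List A) : Prop :=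
  ∃ ops : List (Operation M V), ops.map abs = τ ∧ (∀ o, o ∈ ops ↔ o ∈ X) ∧
    ops.Pairwise (fun a b => ℓ a < ℓ b)

/-- A specification is prefix-closed. -/
def PrefixClosed {A : Type} (T : Set (List A)) : Prop :=
  ∀ u v : List A, u ++ v ∈ T → u ∈ T

/-- The certificate of a set of operations: all abstract sequences induced by
legal linearizations of it. -/
def certs {M V : Type} (T : Set (List (M × V))) (S : Finset (Operation M V)) :
    Set (List (M × V)) :=
  {τ | ∃ ℓ, IsLinearization S ℓ ∧
    InducedSeq (fun o => (o.method, o.value)) S ℓ τ ∧ τ ∈ T}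

/-- τ1 ∼ τ2 : the two sequences admit exactly the same legal continuations. -/
def SpecEquiv {A : Type} (T : Set (List A)) (τ1 τ2 : List A) : Prop :=
  ∀ τ' : List A, τ1 ++ τ' ∈ T ↔ τ2 ++ τ' ∈ T

/-- A specification is anagram-agnostic if any two of its members that are
permutations of one another are equivalent. -/
def AnagramAgnostic {A : Type} (T : Set (List A)) : Prop :=
  ∀ τ1 ∈ T, ∀ τ2 ∈ T, τ1.Perm τ2 → SpecEquiv T τ1 τ2

inductive StackOp (V : Type) : Type
  | push (v : V) : StackOp V
  | pop (v : V) : StackOp V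
  | peek (v : V) : StackOp V
deriving DecidableEq

/-- Execution of stack sequences: `StackExec σ w σ'` holds when the sequence
`w` can be legally executed starting from stack `σ` (top at the head), ending
with stack `σ'`.  `push v` pushes `v`; `pop v` (resp. `peek v`) is enabled
only when the top is `v` and removes it (resp. leaves the stack unchanged). -/
inductive StackExec {V : Type} : List V → List (StackOp V) → List V → Prop
  | nil (σ : List V) : StackExec σ [] σ
  | push {σ σ' : List V} {w : List (StackOp V)} (v : V) :
      StackExec (v :: σ) w σ' → StackExec σ (StackOp.push v :: w) σ'
  | pop {σ σ' : List V} {w : List (StackOp V)} (v : V) :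
      StackExec σ w σ' → StackExec (v :: σ) (StackOp.pop v :: w) σ'
  | peek {σ σ' : List V} {w : List (StackOp V)} (v : V) :
      StackExec (v :: σ) w σ' → StackExec (v :: σ) (StackOp.peek v :: w) σ'

/-- The stack specification: sequences executable from the empty stack. -/
def TStack (V : Type) : Set (List (StackOp V)) :=
  {w | ∃ σ : List V, StackExec [] w σ}

/-- Methods of the stack data type. -/
inductive StackMethod : Type
  | push : StackMethod
  | pop : StackMethod
  | peek : StackMethod
deriving DecidableEq

/-- The stack symbol `m(o)(v(o))` of an operation. -/
def absStackOp {V : Type} (o : Operation StackMethod V) : StackOp V :=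
  match o.method with
  | StackMethod.push => StackOp.push o.value
  | StackMethod.pop => StackOp.pop o.value
  | StackMethod.peek => StackOp.peek o.value

/-- `X` is linearizable w.r.t. specification `T`: some linearization of `X`
induces an abstract sequence belonging to `T`. -/
def Linearizable {M V A : Type} (T : Set (List A)) (abs : Operation M V → A)
    (X : Finset (Operation M V)) : Prop :=
  ∃ (ℓ : Operation M V → ℚ) (τ : List A),
    IsLinearization X ℓ ∧ InducedSeq abs X ℓ τ ∧ τ ∈ T

/-- The mirrored method: push ↦ pop, pop ↦ push, peek ↦ peek. -/
def mirrorMethod : StackMethod → StackMethod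
  | StackMethod.push => StackMethod.pop
  | StackMethod.pop => StackMethod.push
  | StackMethod.peek => StackMethod.peek

/-- The mirror of an operation: same value, mirrored method, and the time
interval flipped along zero. -/
def mirrorOp {V : Type} (o : Operation StackMethod V) : Operation StackMethod V :=
  ⟨o.id, mirrorMethod o.method, o.value, -o.tres, -o.tinv⟩


/-!
Reversing a legal stack sequence and swapping push with pop yields a sequence that leads from the
final stack back to the initial one. Hence negating the linearization points of a linearization of
`H` and mirroring the operations linearizes `mirror(H)` after time `0` with a sequence that undoes
the one of `H`, and the concatenation is legal from the empty stack. Conversely, in a linearization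
of `H ∪ mirror(H)` the operations of `H` are exactly those linearized before time `0`, so they are
linearized by a prefix of a legal sequence, and legal stack sequences are closed under prefixes.
-/

theorem List.Pairwise.mem_takeWhile_iff {α β : Type*} [LinearOrder β] {f : α → β} {c : β}
    {l : List α} (hl : l.Pairwise (fun a b => f a < f b)) {x : α} :
    x ∈ l.takeWhile (f · < c) ↔ x ∈ l ∧ f x < c := by
  induction l with
  | nil => simp
  | cons y t ih =>
    rw [List.pairwise_cons] at hl
    by_cases hy : f y < c
    · rw [List.takeWhile_cons_of_pos (by simpa using hy), List.mem_cons, ih hl.2, List.mem_cons]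
      constructor
      · rintro (rfl | h)
        exacts [⟨.inl rfl, hy⟩, ⟨.inr h.1, h.2⟩]
      · rintro ⟨rfl | h, hx⟩
        exacts [.inl rfl, .inr ⟨h, hx⟩]
    · rw [List.takeWhile_cons_of_neg (by simpa using hy)]
      simp only [List.not_mem_nil, List.mem_cons, false_iff, not_and]
      rintro (rfl | h) hx
      exacts [hy hx, hy ((hl.1 x h).trans hx)]

section Linearization

variable {M V A : Type} {abs : Operation M V → A} {X Y : Finset (Operation M V)}
  {ℓ ℓ₁ ℓ₂ : Operation M V → ℚ}

theorem IsLinearization.wellFormed (h : IsLinearization X ℓ) : WellFormed X :=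
  fun o ho => (h.2 o ho).1.trans (h.2 o ho).2

theorem IsLinearization.mono (h : IsLinearization X ℓ) (hYX : Y ⊆ X) : IsLinearization Y ℓ :=
  ⟨h.1.mono (Finset.coe_subset.mpr hYX), fun o ho => h.2 o (hYX ho)⟩

variable [DecidableEq (Operation M V)]

theorem IsLinearization.piecewise (h₁ : IsLinearization X ℓ₁) (h₂ : IsLinearization Y ℓ₂)
    (hlt : ∀ o ∈ X, ∀ o' ∈ Y, ℓ₁ o < ℓ₂ o') : IsLinearization (X ∪ Y) (X.piecewise ℓ₁ ℓ₂) := by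
  refine ⟨?_, fun o ho => ?_⟩
  · intro o ho o' ho' heq
    simp only [Finset.coe_union, Set.mem_union, Finset.mem_coe] at ho ho'
    by_cases hoX : o ∈ X <;> by_cases ho'X : o' ∈ X <;>
      simp only [Finset.piecewise_eq_of_mem, Finset.piecewise_eq_of_notMem, hoX, ho'X,
        not_false_eq_true] at heq
    · exact h₁.1 hoX ho'X heq
    · exact absurd heq (hlt o hoX o' (ho'.resolve_left ho'X)).ne
    · exact absurd heq (hlt o' ho'X o (ho.resolve_left hoX)).ne'
    · exact h₂.1 (ho.resolve_left hoX) (ho'.resolve_left ho'X) heq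
  · by_cases hoX : o ∈ X
    · rw [Finset.piecewise_eq_of_mem _ _ _ hoX]
      exact h₁.2 o hoX
    · rw [Finset.piecewise_eq_of_notMem _ _ _ hoX]
      exact h₂.2 o ((Finset.mem_union.mp ho).resolve_left hoX)

theorem InducedSeq.append_piecewise {τ₁ τ₂ : List A} (h₁ : InducedSeq abs X ℓ₁ τ₁)
    (h₂ : InducedSeq abs Y ℓ₂ τ₂) (hXY : Disjoint X Y) (hlt : ∀ o ∈ X, ∀ o' ∈ Y, ℓ₁ o < ℓ₂ o') :
    InducedSeq abs (X ∪ Y) (X.piecewise ℓ₁ ℓ₂) (τ₁ ++ τ₂) := by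
  obtain ⟨ops₁, hmap₁, hmem₁, hpair₁⟩ := h₁
  obtain ⟨ops₂, hmap₂, hmem₂, hpair₂⟩ := h₂
  have hℓX : ∀ o ∈ ops₁, X.piecewise ℓ₁ ℓ₂ o = ℓ₁ o := fun o ho =>
    Finset.piecewise_eq_of_mem _ _ _ ((hmem₁ o).mp ho)
  have hℓY : ∀ o ∈ ops₂, X.piecewise ℓ₁ ℓ₂ o = ℓ₂ o := fun o ho =>
    Finset.piecewise_eq_of_notMem _ _ _ (Finset.disjoint_right.mp hXY ((hmem₂ o).mp ho))
  refine ⟨ops₁ ++ ops₂, by rw [List.map_append, hmap₁, hmap₂], fun o => ?_, ?_⟩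
  · simp only [List.mem_append, hmem₁, hmem₂, Finset.mem_union]
  · refine List.pairwise_append.mpr ⟨?_, ?_, fun a ha b hb => ?_⟩
    · exact hpair₁.imp_of_mem fun ha hb hab => by rwa [hℓX _ ha, hℓX _ hb]
    · exact hpair₂.imp_of_mem fun ha hb hab => by rwa [hℓY _ ha, hℓY _ hb]
    · rw [hℓX a ha, hℓY b hb]
      exact hlt a ((hmem₁ a).mp ha) b ((hmem₂ b).mp hb)

end Linearization

theorem Linearizable.filter_lt {M V A : Type} {T : Set (List A)} (hT : PrefixClosed T)
    {abs : Operation M V → A} {X : Finset (Operation M V)} {ℓ : Operation M V → ℚ} {τ : List A}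
    (hℓ : IsLinearization X ℓ) (hτ : InducedSeq abs X ℓ τ) (hτT : τ ∈ T) (c : ℚ) :
    Linearizable T abs (X.filter (ℓ · < c)) := by
  obtain ⟨ops, hmap, hmem, hpair⟩ := hτ
  let p : Operation M V → Bool := (ℓ · < c)
  refine ⟨ℓ, (ops.takeWhile p).map abs, hℓ.mono (Finset.filter_subset _ _),
    ⟨ops.takeWhile p, rfl, fun o => ?_, hpair.sublist (List.takeWhile_sublist p)⟩, ?_⟩
  · rw [hpair.mem_takeWhile_iff, hmem, Finset.mem_filter]
  · refine hT _ ((ops.dropWhile p).map abs) ?_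
    rwa [← List.map_append, List.takeWhile_append_dropWhile, hmap]

namespace StackExec

variable {V : Type}

theorem append {σ σ' σ'' : List V} {u v : List (StackOp V)} (h₁ : StackExec σ u σ')
    (h₂ : StackExec σ' v σ'') : StackExec σ (u ++ v) σ'' := by
  induction h₁ with
  | nil => exact h₂
  | push w _ ih => exact .push w (ih h₂)
  | pop w _ ih => exact .pop w (ih h₂)
  | peek w _ ih => exact .peek w (ih h₂)

theorem of_append {σ σ'' : List V} {u v : List (StackOp V)} (h : StackExec σ (u ++ v) σ'') :
    ∃ σ', StackExec σ u σ' ∧ StackExec σ' v σ'' := by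
  induction u generalizing σ with
  | nil => exact ⟨σ, .nil σ, h⟩
  | cons x t ih =>
    cases h with
    | push w hw => obtain ⟨σ', h₁, h₂⟩ := ih hw; exact ⟨σ', .push w h₁, h₂⟩
    | pop w hw => obtain ⟨σ', h₁, h₂⟩ := ih hw; exact ⟨σ', .pop w h₁, h₂⟩
    | peek w hw => obtain ⟨σ', h₁, h₂⟩ := ih hw; exact ⟨σ', .peek w h₁, h₂⟩

end StackExec

theorem prefixClosed_TStack (V : Type) : PrefixClosed (TStack V) := fun _ _ ⟨_, h⟩ =>
  let ⟨σ', hu, _⟩ := StackExec.of_append h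
  ⟨σ', hu⟩

section Mirror

variable {V : Type}

def mirrorStackOp : StackOp V → StackOp V
  | .push v => .pop v
  | .pop v => .push v
  | .peek v => .peek v

theorem mirrorOp_involutive : Function.Involutive (@mirrorOp V) := by
  rintro ⟨i, m, v, a, b⟩
  cases m <;> simp [mirrorOp, mirrorMethod]

theorem absStackOp_mirrorOp (o : Operation StackMethod V) :
    absStackOp (mirrorOp o) = mirrorStackOp (absStackOp o) := by
  cases h : o.method <;> simp [absStackOp, mirrorOp, mirrorMethod, h, mirrorStackOp]

theorem StackExec.mirror {σ σ' : List V} {w : List (StackOp V)} (h : StackExec σ w σ') :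
    StackExec σ' (w.reverse.map mirrorStackOp) σ := by
  induction h with
  | nil σ => exact .nil σ
  | push v _ ih => simpa [mirrorStackOp] using ih.append (.pop v (.nil _))
  | pop v _ ih => simpa [mirrorStackOp] using ih.append (.push v (.nil _))
  | peek v _ ih => simpa [mirrorStackOp] using ih.append (.peek v (.nil _))

theorem append_mirror_mem_TStack {w : List (StackOp V)} (hw : w ∈ TStack V) :
    w ++ w.reverse.map mirrorStackOp ∈ TStack V :=
  let ⟨_, h⟩ := hw
  ⟨[], h.append h.mirror⟩

variable [DecidableEq V] {X : Finset (Operation StackMethod V)} {ℓ : Operation StackMethod V → ℚ}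

theorem IsLinearization.mirror (h : IsLinearization X ℓ) :
    IsLinearization (X.image mirrorOp) (fun o => -ℓ (mirrorOp o)) := by
  refine ⟨?_, ?_⟩
  · intro x hx y hy hxy
    obtain ⟨a, ha, rfl⟩ := Finset.mem_image.mp hx
    obtain ⟨b, hb, rfl⟩ := Finset.mem_image.mp hy
    simp only [mirrorOp_involutive _, neg_inj] at hxy
    rw [h.1 ha hb hxy]
  · refine Finset.forall_mem_image.mpr fun a ha => ?_
    simp only [mirrorOp_involutive a]
    exact ⟨neg_lt_neg (h.2 a ha).2, neg_lt_neg (h.2 a ha).1⟩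

theorem InducedSeq.mirror {τ : List (StackOp V)} (h : InducedSeq absStackOp X ℓ τ) :
    InducedSeq absStackOp (X.image mirrorOp) (fun o => -ℓ (mirrorOp o))
      (τ.reverse.map mirrorStackOp) := by
  obtain ⟨ops, hmap, hmem, hpair⟩ := h
  refine ⟨ops.reverse.map mirrorOp, ?_, fun o => ?_, ?_⟩
  · simp only [← hmap, List.map_reverse, List.map_map, Function.comp_def, absStackOp_mirrorOp]
  · simp only [List.mem_map, List.mem_reverse, hmem, Finset.mem_image]
  · simpa [List.pairwise_map, List.pairwise_reverse, mirrorOp_involutive _] using hpair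

theorem disjoint_image_mirrorOp (hwf : WellFormed X) (hneg : ∀ o ∈ X, o.tres < 0) :
    Disjoint X (X.image mirrorOp) := by
  refine Finset.disjoint_right.mpr (Finset.forall_mem_image.mpr fun a ha hmem => ?_)
  have : -a.tinv < 0 := hneg _ hmem
  linarith [hwf a ha, hneg a ha]

theorem filter_lt_zero_union_image_mirrorOp (hneg : ∀ o ∈ X, o.tres < 0)
    (hℓ : IsLinearization (X ∪ X.image mirrorOp) ℓ) :
    (X ∪ X.image mirrorOp).filter (ℓ · < 0) = X := by
  ext o
  simp only [Finset.mem_filter, Finset.mem_union, Finset.mem_image]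
  constructor
  · rintro ⟨ho | ⟨a, ha, rfl⟩, hℓo⟩
    · exact ho
    · have := (hℓ.2 _ (Finset.mem_union_right _ (Finset.mem_image_of_mem _ ha))).1
      linarith [show (mirrorOp a).tinv = -a.tres from rfl, hneg a ha]
  · intro ho
    exact ⟨.inl ho, (hℓ.2 o (Finset.mem_union_left _ ho)).2.trans (hneg o ho)⟩

end Mirror

theorem stmt17_general {V : Type} [DecidableEq V]
    (H : Finset (Operation StackMethod V))
    (hneg : ∀ o ∈ H, o.tres < 0) :
    Linearizable (TStack V) absStackOp H ↔
      Linearizable (TStack V) absStackOp (H ∪ H.image mirrorOp) := by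
  constructor
  · rintro ⟨ℓ, τ, hℓ, hτ, hτT⟩
    have hℓneg : ∀ o ∈ H, ℓ o < 0 := fun o ho => (hℓ.2 o ho).2.trans (hneg o ho)
    have hlt : ∀ o ∈ H, ∀ o' ∈ H.image mirrorOp, ℓ o < -ℓ (mirrorOp o') := by
      refine fun o ho => Finset.forall_mem_image.mpr fun a ha => ?_
      rw [mirrorOp_involutive a]
      linarith [hℓneg o ho, hℓneg a ha]
    have hdisj := disjoint_image_mirrorOp hℓ.wellFormed hneg
    exact ⟨_, _, hℓ.piecewise hℓ.mirror hlt, hτ.append_piecewise hτ.mirror hdisj hlt,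
      append_mirror_mem_TStack hτT⟩
  · rintro ⟨ℓ, τ, hℓ, hτ, hτT⟩
    rw [← filter_lt_zero_union_image_mirrorOp hneg hℓ]
    exact Linearizable.filter_lt (prefixClosed_TStack V) hℓ hτ hτT 0

theorem stmt17 {V : Type} [DecidableEq V]
    (H : Finset (Operation StackMethod V)) (hwf : WellFormed H)
    (hneg : ∀ o ∈ H, o.tres < 0) :
    Linearizable (TStack V) absStackOp H ↔
      Linearizable (TStack V) absStackOp (H ∪ H.image mirrorOp) :=
  stmt17_general H hneg
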